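/- Fix m > 0 and e ≠ 0, let φ₀ be a Choquard ground state, and let e₁ = (1,0) ∈ ℂ². Define Φ̂₂(y) = φ₀(y) e₁, Φ̂₁(y) = (i/(2m)) σ·∇Φ̂₂(y), and Â⁰ = e² N*φ₀². Then the pair (Φ̂₁, Φ̂₂) together with Â⁰ satisfies the nonrelativistic limit system: 2mΦ̂₁ + P̸Φ̂₂ = 0 and P̸Φ̂₁ − (1/(2m))Φ̂₂ + Â⁰Φ̂₂ = 0 pointwise on ℝ³, where P̸ = −iσ·∇. -/

import Mathlib

open MeasureTheory Real

noncomputable section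

/-- Partial derivative in the `j`-th coordinate direction on `ℝ³`. -/
def pd {E : Type*} [NormedAddCommGroup E] [NormedSpace ℝ E]
    (j : Fin 3) (f : EuclideanSpace ℝ (Fin 3) → E)
    (x : EuclideanSpace ℝ (Fin 3)) : E :=
  fderiv ℝ f x (EuclideanSpace.single j 1)

/-- Laplacian on `ℝ³`, `Δf = Σⱼ ∂ⱼ∂ⱼ f`. -/
def lap {E : Type*} [NormedAddCommGroup E] [NormedSpace ℝ E]
    (f : EuclideanSpace ℝ (Fin 3) → E) (x : EuclideanSpace ℝ (Fin 3)) : E :=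
  ∑ j : Fin 3, pd j (pd j f) x

/-- Convolution with the Newtonian potential `N(x) = 1/(4π|x|)` on `ℝ³`,
for real-valued functions. -/
def Nconv (h : EuclideanSpace ℝ (Fin 3) → ℝ) (x : EuclideanSpace ℝ (Fin 3)) : ℝ :=
  ∫ y, h y / (4 * π * ‖x - y‖)

/-- A Choquard ground state: a strictly positive, spherically symmetric,
Schwartz-class function `φ₀ : ℝ³ → ℝ` with
`(1/(2m))φ₀ − (1/(2m))Δφ₀ − e²(N*φ₀²)φ₀ = 0`. -/
def IsChoquardGroundState (m e : ℝ) (φ₀ : EuclideanSpace ℝ (Fin 3) → ℝ) : Prop :=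
  (∀ x, 0 < φ₀ x) ∧
  (∀ x y : EuclideanSpace ℝ (Fin 3), ‖x‖ = ‖y‖ → φ₀ x = φ₀ y) ∧
  (∃ Φ : SchwartzMap (EuclideanSpace ℝ (Fin 3)) ℝ, ∀ x, Φ x = φ₀ x) ∧
  (∀ x, (1 / (2 * m)) * φ₀ x - (1 / (2 * m)) * lap φ₀ x
      - e ^ 2 * Nconv (fun y => (φ₀ y) ^ 2) x * φ₀ x = 0)

/-- The linearized operator `L₀v = −(1/(2m))Δv + (1/(2m))v − e²(N*φ₀²)v`. -/
def L0 (m e : ℝ) (φ₀ v : EuclideanSpace ℝ (Fin 3) → ℝ)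
    (x : EuclideanSpace ℝ (Fin 3)) : ℝ :=
  -(1 / (2 * m)) * lap v x + (1 / (2 * m)) * v x
    - e ^ 2 * Nconv (fun y => (φ₀ y) ^ 2) x * v x

/-- The linearized operator `L₁v = L₀v − 2e²(N*(φ₀v))φ₀`. -/
def L1 (m e : ℝ) (φ₀ v : EuclideanSpace ℝ (Fin 3) → ℝ)
    (x : EuclideanSpace ℝ (Fin 3)) : ℝ :=
  L0 m e φ₀ v x - 2 * e ^ 2 * Nconv (fun y => φ₀ y * v y) x * φ₀ x

/-- The Pauli matrices `σ₁, σ₂, σ₃`. -/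
def pauli : Fin 3 → Matrix (Fin 2) (Fin 2) ℂ :=
  ![!![0, 1; 1, 0], !![0, -Complex.I; Complex.I, 0], !![1, 0; 0, -1]]

/-- `σ·∇ = σ₁∂₁ + σ₂∂₂ + σ₃∂₃` acting on `f : ℝ³ → ℂ²`. -/
def sigmaDeriv (f : EuclideanSpace ℝ (Fin 3) → Fin 2 → ℂ)
    (x : EuclideanSpace ℝ (Fin 3)) : Fin 2 → ℂ :=
  ∑ j : Fin 3, (pauli j).mulVec (pd j f x)

/-- `P̸ = −i σ·∇`. -/
def Pslash (f : EuclideanSpace ℝ (Fin 3) → Fin 2 → ℂ)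
    (x : EuclideanSpace ℝ (Fin 3)) : Fin 2 → ℂ :=
  (-Complex.I) • sigmaDeriv f x

/-! The first equation is pure algebra: `2m Φ̂₁ = i σ·∇Φ̂₂ = -P̸Φ̂₂`. For the second,
`P̸Φ̂₁ = (1/(2m)) (σ·∇)²Φ̂₂`. The Pauli matrices satisfy `σⱼσₖ + σₖσⱼ = 2δⱼₖ`, so together with
the symmetry of second derivatives this gives `(σ·∇)² = Δ` on `C²` functions. Hence
`P̸Φ̂₁ = (1/(2m)) (Δφ₀) e₁`, and the second equation is the Choquard equation times `e₁`. -/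

open Matrix

section PartialDerivatives

variable {F G : Type*} [NormedAddCommGroup F] [NormedSpace ℝ F]
  [NormedAddCommGroup G] [NormedSpace ℝ G]
  {f : EuclideanSpace ℝ (Fin 3) → F} {x : EuclideanSpace ℝ (Fin 3)}

lemma pd_comp_clm (L : F →L[ℝ] G) (hf : DifferentiableAt ℝ f x) (j : Fin 3) :
    pd j (fun y => L (f y)) x = L (pd j f x) := by
  simp [pd, fderiv_fun_comp x L.differentiableAt hf]

lemma ContDiff.differentiable_pd (hf : ContDiff ℝ 2 f) (j : Fin 3) :
    Differentiable ℝ (pd j f) :=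
  ((hf.fderiv_right (m := 1) (by norm_num)).clm_apply contDiff_const).differentiable one_ne_zero

lemma pd_pd_eq_fderiv_fderiv (hf : DifferentiableAt ℝ (fderiv ℝ f) x) (j k : Fin 3) :
    pd j (pd k f) x
      = fderiv ℝ (fderiv ℝ f) x (EuclideanSpace.single j 1) (EuclideanSpace.single k 1) := by
  change fderiv ℝ (fun y => fderiv ℝ f y (EuclideanSpace.single k 1)) x _ = _
  simp [fderiv_clm_apply hf (differentiableAt_const _)]

lemma lap_comp_clm (L : F →L[ℝ] G) (hf : ContDiff ℝ 2 f) :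
    lap (fun y => L (f y)) x = L (lap f x) := by
  have hd : Differentiable ℝ f := hf.differentiable (by norm_num)
  have hpd : ∀ j, pd j (fun y => L (f y)) = fun y => L (pd j f y) :=
    fun j => funext fun y => pd_comp_clm L (hd y) j
  simp only [lap, hpd, map_sum, pd_comp_clm L (hf.differentiable_pd _ x)]

end PartialDerivatives

lemma sum_mulVec_sum_mulVec_of_anticomm {𝕜 ι n : Type*} [Field 𝕜] [CharZero 𝕜]
    [Fintype ι] [DecidableEq ι] [Fintype n] [DecidableEq n] (γ : ι → Matrix n n 𝕜)
    (hγ : ∀ j k, γ j * γ k + γ k * γ j = if j = k then 2 else 0)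
    (D : ι → ι → n → 𝕜) (hD : ∀ j k, D j k = D k j) :
    ∑ j, γ j *ᵥ ∑ k, γ k *ᵥ D j k = ∑ j, D j j := by
  set S := ∑ j, γ j *ᵥ ∑ k, γ k *ᵥ D j k
  have hS : S = ∑ j, ∑ k, (γ j * γ k) *ᵥ D j k := by
    simp only [S, mulVec_sum, mulVec_mulVec]
  have h2 : (2 : 𝕜) • S = (2 : 𝕜) • ∑ j, D j j := calc
    (2 : 𝕜) • S = S + S := two_smul 𝕜 S
    _ = ∑ j, ∑ k, (γ j * γ k + γ k * γ j) *ᵥ D j k := by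
      conv_lhs => rw [hS]; enter [2]; rw [Finset.sum_comm]
      simp only [hD _ _, add_mulVec, Finset.sum_add_distrib]
    _ = (2 : 𝕜) • ∑ j, D j j := by
      refine (Finset.sum_congr rfl fun j _ => ?_).trans Finset.smul_sum.symm
      rw [Finset.sum_eq_single j (fun k _ hk => by simp [hγ, Ne.symm hk]) (by simp)]
      simp [hγ]
  exact smul_right_injective _ two_ne_zero h2

lemma pauli_anticomm (j k : Fin 3) :
    pauli j * pauli k + pauli k * pauli j = if j = k then 2 else 0 := by
  have two : (2 : Matrix (Fin 2) (Fin 2) ℂ) = !![2, 0; 0, 2] := by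
    ext a b; fin_cases a <;> fin_cases b <;> rfl
  have zero : (0 : Matrix (Fin 2) (Fin 2) ℂ) = !![0, 0; 0, 0] := eta_fin_two 0
  fin_cases j <;> fin_cases k <;> simp [pauli, two, zero, one_add_one_eq_two]

def sigmaDotCLM : (EuclideanSpace ℝ (Fin 3) →L[ℝ] (Fin 2 → ℂ)) →L[ℝ] (Fin 2 → ℂ) :=
  ∑ j, (((pauli j).mulVecLin.restrictScalars ℝ).toContinuousLinearMap).comp
    (ContinuousLinearMap.apply ℝ (Fin 2 → ℂ) (EuclideanSpace.single j 1))

lemma sigmaDotCLM_apply (L : EuclideanSpace ℝ (Fin 3) →L[ℝ] (Fin 2 → ℂ)) :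
    sigmaDotCLM L = ∑ j, pauli j *ᵥ L (EuclideanSpace.single j 1) := by
  simp [sigmaDotCLM]

lemma sigmaDeriv_eq_sigmaDotCLM_fderiv (f : EuclideanSpace ℝ (Fin 3) → Fin 2 → ℂ) :
    sigmaDeriv f = fun x => sigmaDotCLM (fderiv ℝ f x) := by
  ext x : 1
  simp [sigmaDeriv, sigmaDotCLM_apply, pd]

section SigmaDeriv

variable {f : EuclideanSpace ℝ (Fin 3) → Fin 2 → ℂ} {x : EuclideanSpace ℝ (Fin 3)}

lemma ContDiff.sigmaDeriv {n : WithTop ℕ∞} (hf : ContDiff ℝ (n + 1) f) :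
    ContDiff ℝ n (sigmaDeriv f) := by
  rw [sigmaDeriv_eq_sigmaDotCLM_fderiv]
  exact sigmaDotCLM.contDiff.comp (hf.fderiv_right le_rfl)

lemma sigmaDeriv_const_smul (c : ℂ) (hf : DifferentiableAt ℝ f x) :
    sigmaDeriv (fun y => c • f y) x = c • sigmaDeriv f x := by
  simp [sigmaDeriv, pd, fderiv_fun_const_smul hf, mulVec_smul, Finset.smul_sum]

lemma sigmaDeriv_sigmaDeriv (hf : ContDiff ℝ 2 f) : sigmaDeriv (sigmaDeriv f) x = lap f x := by
  have hDf : DifferentiableAt ℝ (fderiv ℝ f) x :=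
    (hf.fderiv_right (m := 1) (by norm_num)).differentiable one_ne_zero x
  set D := fun j k : Fin 3 =>
    fderiv ℝ (fderiv ℝ f) x (EuclideanSpace.single j 1) (EuclideanSpace.single k 1)
  have hD : ∀ j k, D j k = D k j := fun j k =>
    (hf.contDiffAt.isSymmSndFDerivAt (by simp)).eq _ _
  have hpd : ∀ j, pd j (sigmaDeriv f) x = sigmaDotCLM (pd j (fderiv ℝ f) x) := by
    rw [sigmaDeriv_eq_sigmaDotCLM_fderiv]
    exact pd_comp_clm sigmaDotCLM hDf
  calc sigmaDeriv (sigmaDeriv f) x = ∑ j, pauli j *ᵥ ∑ k, pauli k *ᵥ D j k := by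
        simp only [sigmaDeriv, hpd, sigmaDotCLM_apply]; rfl
    _ = ∑ j, D j j := sum_mulVec_sum_mulVec_of_anticomm pauli pauli_anticomm D hD
    _ = lap f x := by simp [lap, pd_pd_eq_fderiv_fderiv hDf, D]

end SigmaDeriv

theorem nonrelativistic_limit_system_holds_general
    (m e : ℝ) (hm : 0 < m)
    (φ₀ : EuclideanSpace ℝ (Fin 3) → ℝ)
    (hφ₀ : IsChoquardGroundState m e φ₀)
    (Φ₂ Φ₁ : EuclideanSpace ℝ (Fin 3) → Fin 2 → ℂ)
    (hΦ₂ : ∀ y, Φ₂ y = ((φ₀ y : ℂ)) • (![1, 0] : Fin 2 → ℂ))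
    (hΦ₁ : ∀ y, Φ₁ y = (Complex.I / (2 * m)) • sigmaDeriv Φ₂ y)
    (A0 : EuclideanSpace ℝ (Fin 3) → ℝ)
    (hA0 : ∀ y, A0 y = e ^ 2 * Nconv (fun z => (φ₀ z) ^ 2) y) :
    (∀ x, ((2 * m : ℝ) : ℂ) • Φ₁ x + Pslash Φ₂ x = 0) ∧
    (∀ x, Pslash Φ₁ x - ((1 / (2 * m) : ℝ) : ℂ) • Φ₂ x
        + ((A0 x : ℝ) : ℂ) • Φ₂ x = 0) := by
  obtain ⟨-, -, ⟨Φ, hΦ⟩, hChoquard⟩ := hφ₀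
  have hm' : (m : ℂ) ≠ 0 := by exact_mod_cast hm.ne'
  have hφ₀_smooth : ContDiff ℝ 2 φ₀ := funext hΦ ▸ Φ.smooth 2
  set e₁ : Fin 2 → ℂ := ![1, 0]
  have hΦ₂_eq : Φ₂ = fun y => ContinuousLinearMap.toSpanSingleton ℝ e₁ (φ₀ y) :=
    funext fun y => by simp [hΦ₂, Complex.coe_smul]
  have hΦ₂_smooth : ContDiff ℝ 2 Φ₂ :=
    hΦ₂_eq ▸ (ContinuousLinearMap.toSpanSingleton ℝ e₁).contDiff.comp hφ₀_smooth
  refine ⟨fun x => ?_, fun x => ?_⟩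
  · rw [hΦ₁, Pslash, smul_smul, ← add_smul]
    convert zero_smul ℂ (sigmaDeriv Φ₂ x)
    push_cast
    field_simp
    ring
  · have hdiff : DifferentiableAt ℝ (sigmaDeriv Φ₂) x :=
      (hΦ₂_smooth.sigmaDeriv (n := 1)).differentiable one_ne_zero x
    have hlap : lap Φ₂ x = ((lap φ₀ x : ℝ) : ℂ) • e₁ := by
      rw [hΦ₂_eq, lap_comp_clm _ hφ₀_smooth]
      simp
    have hChoquard_x := congrArg (fun r : ℝ => (r : ℂ)) (hChoquard x)
    rw [Pslash, show Φ₁ = fun y => _ from funext hΦ₁, sigmaDeriv_const_smul _ hdiff,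
      sigmaDeriv_sigmaDeriv hΦ₂_smooth, hlap, hΦ₂ x, hA0]
    simp only [smul_smul, ← sub_smul, ← add_smul]
    convert zero_smul ℂ e₁
    push_cast at hChoquard_x ⊢
    linear_combination -hChoquard_x - ((lap φ₀ x : ℝ) : ℂ) / (2 * m) * Complex.I_sq

/-- with `Φ̂₂ = φ₀ e₁`, `Φ̂₁ = (i/(2m)) σ·∇Φ̂₂` and
`Â⁰ = e² N*φ₀²` built from a Choquard ground state `φ₀`, the
nonrelativistic limit system `2mΦ̂₁ + P̸Φ̂₂ = 0` and
`P̸Φ̂₁ − (1/(2m))Φ̂₂ + Â⁰Φ̂₂ = 0` holds pointwise on `ℝ³`. -/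
theorem nonrelativistic_limit_system_holds
    (m e : ℝ) (hm : 0 < m) (he : e ≠ 0)
    (φ₀ : EuclideanSpace ℝ (Fin 3) → ℝ)
    (hφ₀ : IsChoquardGroundState m e φ₀)
    (Φ₂ Φ₁ : EuclideanSpace ℝ (Fin 3) → Fin 2 → ℂ)
    (hΦ₂ : ∀ y, Φ₂ y = ((φ₀ y : ℂ)) • (![1, 0] : Fin 2 → ℂ))
    (hΦ₁ : ∀ y, Φ₁ y = (Complex.I / (2 * m)) • sigmaDeriv Φ₂ y)
    (A0 : EuclideanSpace ℝ (Fin 3) → ℝ)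
    (hA0 : ∀ y, A0 y = e ^ 2 * Nconv (fun z => (φ₀ z) ^ 2) y) :
    (∀ x, ((2 * m : ℝ) : ℂ) • Φ₁ x + Pslash Φ₂ x = 0) ∧
    (∀ x, Pslash Φ₁ x - ((1 / (2 * m) : ℝ) : ℂ) • Φ₂ x
        + ((A0 x : ℝ) : ℂ) • Φ₂ x = 0) :=
  nonrelativistic_limit_system_holds_general m e hm φ₀ hφ₀ Φ₂ Φ₁ hΦ₂ hΦ₁ A0 hA0
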